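/- For every m ≥ 1, the 2m×2m matrix N_{2m} over ℚ, obtained from the incidence matrix of S_{2m} = {y₁,…,y_{2m}} by deleting the columns corresponding to the symbols x₁, x₂, x₃, α_{2m}, is invertible; consequently S_{2m} is a good set with boundary {x₁, x₂, x₃, α_{2m}}. -/

import Mathlib

open scoped BigOperators

/-- Symbols: x₁,x₂,x₃,x₄ are 0,1,2,3 and αⱼ = j+3 (so all symbols are distinct naturals). -/
def α (j : ℕ) : ℕ := j + 3

/-- The points y₁, y₂, y₃, … of the paper's construction. -/
def y : ℕ → Fin 4 → ℕ := fun k =>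
  if k = 1 then ![0, 1, 2, 3]
  else if k = 2 then ![0, 1, α 1, α 2]
  else match k % 4 with
    | 1 => ![0, α (k - 1), α k, α (k + 1)]
    | 2 => ![α (k - 3), 1, α (k - 1), α k]
    | 3 => ![α k, α (k + 1), 2, α (k - 1)]
    | _ => ![α (k - 1), α k, α (k - 3), 3]

/-- u = (u₁,u₂,u₃,u₄) solves equation (1) for f on S. -/
def Solves (S : Set (Fin 4 → ℕ)) (f : (Fin 4 → ℕ) → ℂ) (u : Fin 4 → ℕ → ℂ) : Prop :=
  ∀ p ∈ S, f p = ∑ i, u i (p i)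

/-- S is good: every complex function on S decomposes into coordinate functions. -/
def IsGood (S : Set (Fin 4 → ℕ)) : Prop := ∀ f, ∃ u, Solves S f u

/-- i-th projection of S. -/
def proj (S : Set (Fin 4 → ℕ)) (i : Fin 4) : Set ℕ := (fun p => p i) '' S

/-- B is a boundary set of S: for every f and every prescription U on B,
equation (1) admits a solution agreeing with U on B, unique on the projections of S. -/
def IsBoundary (S : Set (Fin 4 → ℕ)) (B : Set ℕ) : Prop :=
  B ⊆ ⋃ i, proj S i ∧
  ∀ f : (Fin 4 → ℕ) → ℂ, ∀ U : ℕ → ℂ,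
    (∃ u, Solves S f u ∧ ∀ i, ∀ a ∈ B ∩ proj S i, u i a = U a) ∧
    ∀ u v, Solves S f u → (∀ i, ∀ a ∈ B ∩ proj S i, u i a = U a) →
      Solves S f v → (∀ i, ∀ a ∈ B ∩ proj S i, v i a = U a) →
      ∀ i, ∀ a ∈ proj S i, u i a = v i a

/-- S is full: a maximal good subset of the product of its projections. -/
def IsFull (S : Set (Fin 4 → ℕ)) : Prop :=
  IsGood S ∧ ∀ T : Set (Fin 4 → ℕ), S ⊆ T → (∀ p ∈ T, ∀ i, p i ∈ proj S i) →
    IsGood T → T = S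

/-- Sₙ = {y₁,…,y_N}. -/
def Sn (N : ℕ) : Set (Fin 4 → ℕ) := y '' Set.Icc 1 N

/-- The infinite set S = {y₁, y₂, …}. -/
def Sinf : Set (Fin 4 → ℕ) := y '' Set.Ici 1

/-- The extra point z = zₙ = (α_{4n−1}, x₂, α_{4n−3}, x₄). -/
def z (n : ℕ) : Fin 4 → ℕ := ![α (4 * n - 1), 1, α (4 * n - 3), 3]

/-- Two points of S are related iff some finite full subset of S contains both. -/
def Related (S : Set (Fin 4 → ℕ)) (p q : Fin 4 → ℕ) : Prop :=
  ∃ K, K ⊆ S ∧ K.Finite ∧ IsFull K ∧ p ∈ K ∧ q ∈ K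

/-- The 4n×4n incidence matrix A_{4n}: rows y₂,…,y_{4n},zₙ; columns α₁,…,α_{4n}. -/
def A (n : ℕ) : Matrix (Fin (4 * n)) (Fin (4 * n)) ℚ :=
  Matrix.of fun i j =>
    if ∃ k, (if (i : ℕ) = 4 * n - 1 then z n else y ((i : ℕ) + 2)) k = (j : ℕ) + 4
    then 1 else 0

/-! Every symbol occurs in exactly one coordinate of `S_{2m}`, so a solution `(u₁,…,u₄)` is the
same thing as one function `W` on the symbols with `∑ᵢ W (y_k i) = f (y_k)`; once `W` is
prescribed on the boundary symbols this is the square system `N_{2m} w = b`. Its kernel is trivial: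
row `y₁` gives `w(x₄) = 0`, row `y₂` gives `w(α₁) + w(α₂) = 0`, and for `n ≥ 1` the rows
`y_{2n+1}`, `y_{2n+2}` differ only in `α_{2n}` versus `α_{2n-1}`, so together with
`w(α_{2n-1}) + w(α_{2n}) = 0` both vanish (this needs `2 ≠ 0`). Invertibility of `N_{2m}` gives
existence of solutions, injectivity their uniqueness. -/

lemma y_one : y 1 = ![0, 1, 2, 3] := rfl

lemma y_two : y 2 = ![0, 1, 4, 5] := rfl

lemma y_of_mod_four_eq_one {k : ℕ} (hk : k ≠ 1) (h : k % 4 = 1) :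
    y k = ![0, k + 2, k + 3, k + 4] := by
  have e : k - 1 + 3 = k + 2 := by omega
  simp only [y, hk, show k ≠ 2 by omega, if_false, h, α, e]

lemma y_of_mod_four_eq_two {k : ℕ} (hk : k ≠ 2) (h : k % 4 = 2) :
    y k = ![k, 1, k + 2, k + 3] := by
  have e₁ : k - 3 + 3 = k := by omega
  have e₂ : k - 1 + 3 = k + 2 := by omega
  simp only [y, hk, show k ≠ 1 by omega, if_false, h, α, e₁, e₂]

lemma y_of_mod_four_eq_three {k : ℕ} (h : k % 4 = 3) :
    y k = ![k + 3, k + 4, 2, k + 2] := by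
  have e : k - 1 + 3 = k + 2 := by omega
  simp only [y, show k ≠ 1 by omega, show k ≠ 2 by omega, if_false, h, α, e]

lemma y_of_mod_four_eq_zero {k : ℕ} (hk : k ≠ 0) (h : k % 4 = 0) :
    y k = ![k + 2, k + 3, k, 3] := by
  have e₁ : k - 3 + 3 = k := by omega
  have e₂ : k - 1 + 3 = k + 2 := by omega
  simp only [y, show k ≠ 1 by omega, show k ≠ 2 by omega, if_false, h, α, e₁, e₂]

/-- The coordinate in which a symbol occurs: `xᵢ` in coordinate `i`, and `αⱼ` (the symbol
`j + 3`) in coordinate `j + 1 mod 4`. -/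
def coord (s : ℕ) : Fin 4 := ⟨if s < 4 then s else (s - 2) % 4, by split_ifs <;> omega⟩

lemma coord_val_of_lt {s : ℕ} (hs : s < 4) : (coord s : ℕ) = s :=
  if_pos hs

lemma coord_val_of_ge {s : ℕ} (hs : 4 ≤ s) : (coord s : ℕ) = (s - 2) % 4 :=
  if_neg (by omega)

lemma coord_y {k : ℕ} (hk : 1 ≤ k) (i : Fin 4) : coord (y k i) = i := by
  rcases (by omega : k = 1 ∨ k = 2 ∨ (k ≠ 1 ∧ k ≠ 2 ∧ 0 < k)) with rfl | rfl | ⟨h1, h2, h0⟩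
  · fin_cases i <;> decide
  · fin_cases i <;> decide
  have : k % 4 = 0 ∨ k % 4 = 1 ∨ k % 4 = 2 ∨ k % 4 = 3 := by omega
  rcases this with h | h | h | h
  · rw [y_of_mod_four_eq_zero (by omega) h]
    fin_cases i <;> simp (disch := omega) [Fin.ext_iff, coord_val_of_lt, coord_val_of_ge] <;> omega
  · rw [y_of_mod_four_eq_one h1 h]
    fin_cases i <;> simp (disch := omega) [Fin.ext_iff, coord_val_of_lt, coord_val_of_ge] <;> omega
  · rw [y_of_mod_four_eq_two h2 h]
    fin_cases i <;> simp (disch := omega) [Fin.ext_iff, coord_val_of_lt, coord_val_of_ge] <;> omega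
  · rw [y_of_mod_four_eq_three h]
    fin_cases i <;> simp (disch := omega) [Fin.ext_iff, coord_val_of_lt, coord_val_of_ge] <;> omega

lemma y_injective {k : ℕ} (hk : 1 ≤ k) : Function.Injective (y k) :=
  Function.LeftInverse.injective (coord_y hk)

lemma y_le {k : ℕ} (hk : 1 ≤ k) (i : Fin 4) : y k i ≤ k + 3 + k % 2 := by
  rcases (by omega : k = 1 ∨ k = 2 ∨ (k ≠ 1 ∧ k ≠ 2 ∧ 0 < k)) with rfl | rfl | ⟨h1, h2, h0⟩
  · fin_cases i <;> simp [y_one]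
  · fin_cases i <;> simp [y_two]
  have : k % 4 = 0 ∨ k % 4 = 1 ∨ k % 4 = 2 ∨ k % 4 = 3 := by omega
  rcases this with h | h | h | h
  · rw [y_of_mod_four_eq_zero (by omega) h]; fin_cases i <;> simp <;> omega
  · rw [y_of_mod_four_eq_one h1 h]; fin_cases i <;> simp <;> omega
  · rw [y_of_mod_four_eq_two h2 h]; fin_cases i <;> simp <;> omega
  · rw [y_of_mod_four_eq_three h]; fin_cases i <;> simp <;> omega

lemma sum_y_two_mul_add_one {M : Type*} [AddCommMonoid M] (W : ℕ → M) {n : ℕ} (hn : n ≠ 0)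
    (h0 : W 0 = 0) (h2 : W 2 = 0) :
    ∑ i, W (y (2 * n + 1) i) = W (2 * n + 3) + W (2 * n + 4) + W (2 * n + 5) := by
  rcases Nat.even_or_odd n with ⟨l, rfl⟩ | ⟨l, rfl⟩
  · rw [Fin.sum_univ_four, y_of_mod_four_eq_one (by omega) (by omega)]
    simp only [Matrix.cons_val, h0, zero_add]
  · rw [Fin.sum_univ_four, y_of_mod_four_eq_three (by omega)]
    simp only [Matrix.cons_val, h2, add_zero]
    ring_nf
    abel

lemma sum_y_two_mul_add_two {M : Type*} [AddCommMonoid M] (W : ℕ → M) {n : ℕ} (hn : n ≠ 0)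
    (h1 : W 1 = 0) (h3 : W 3 = 0) :
    ∑ i, W (y (2 * n + 2) i) = W (2 * n + 2) + W (2 * n + 4) + W (2 * n + 5) := by
  rcases Nat.even_or_odd n with ⟨l, rfl⟩ | ⟨l, rfl⟩
  · rw [Fin.sum_univ_four, y_of_mod_four_eq_two (by omega) (by omega)]
    simp only [Matrix.cons_val, h1, add_zero]
  · rw [Fin.sum_univ_four, y_of_mod_four_eq_zero (by omega) (by omega)]
    simp only [Matrix.cons_val, h3, add_zero]
    ring_nf
    abel

def boundary (m : ℕ) : Set ℕ := {0, 1, 2, α (2 * m)}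

lemma mem_boundary_iff {m s : ℕ} : s ∈ boundary m ↔ s = 0 ∨ s = 1 ∨ s = 2 ∨ s = 2 * m + 3 := by
  simp [boundary, α]

section IncidenceMatrix

open Matrix

variable {K : Type*} {m : ℕ}

/-- The paper's `N_{2m}`, over any ring. -/
def incidence (K : Type*) [Zero K] [One K] (m : ℕ) : Matrix (Fin (2 * m)) (Fin (2 * m)) K :=
  Matrix.of fun i j => if ∃ k, y ((i : ℕ) + 1) k = (j : ℕ) + 3 then 1 else 0

def extendByZero [Zero K] (v : Fin (2 * m) → K) : ℕ → K :=
  fun s => if h : 3 ≤ s ∧ s < 2 * m + 3 then v ⟨s - 3, by omega⟩ else 0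

lemma extendByZero_add_three [Zero K] (v : Fin (2 * m) → K) (j : Fin (2 * m)) :
    extendByZero v ((j : ℕ) + 3) = v j := by
  simp [extendByZero]

lemma extendByZero_of_mem_boundary [Zero K] (v : Fin (2 * m) → K) {s : ℕ}
    (hs : s ∈ boundary m) : extendByZero v s = 0 :=
  dif_neg (by rw [mem_boundary_iff] at hs; omega)

lemma sum_y_eq_mulVec [Semiring K] (W : ℕ → K) (hW : ∀ s ∈ boundary m, W s = 0)
    (r : Fin (2 * m)) :
    ∑ i, W (y ((r : ℕ) + 1) i) = (incidence K m *ᵥ fun j => W ((j : ℕ) + 3)) r := by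
  simp only [Matrix.mulVec, dotProduct, incidence, Matrix.of_apply, ite_mul, one_mul, zero_mul]
  have hk : 1 ≤ (r : ℕ) + 1 := by omega
  have hrange : ∀ i, W (y (r + 1) i) ≠ 0 → 3 ≤ y (r + 1) i ∧ y (r + 1) i < 2 * m + 3 := by
    intro i hi
    have hle := y_le hk i
    have hnb : y (r + 1) i ∉ boundary m := fun hb => hi (hW _ hb)
    rw [mem_boundary_iff] at hnb
    omega
  refine Finset.sum_bij_ne_zero (fun i _ hi => ⟨y (r + 1) i - 3, by have := hrange i hi; omega⟩)
    (by simp) ?_ ?_ ?_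
  · intro a _ ha b _ hb hab
    have := hrange a ha
    have := hrange b hb
    exact y_injective hk (by simp only [Fin.ext_iff] at hab; omega)
  · intro j _ hj
    obtain ⟨i, hi⟩ : ∃ i, y (r + 1) i = j + 3 := by
      by_contra h
      exact hj (if_neg h)
    rw [if_pos ⟨i, hi⟩] at hj
    exact ⟨i, Finset.mem_univ _, by rwa [hi], Fin.ext (by simp [hi])⟩
  · intro i _ hi
    have := hrange i hi
    rw [if_pos ⟨i, by simp only; omega⟩]
    congr
    simp only
    omega

variable [Field K]

theorem eq_zero_of_sum_y_eq_zero (h2 : (2 : K) ≠ 0) {W : ℕ → K}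
    (hB : ∀ s ∈ boundary m, W s = 0)
    (hrow : ∀ k, 1 ≤ k → k ≤ 2 * m → ∑ i, W (y k i) = 0) :
    ∀ s ≤ 2 * m + 3, W s = 0 := by
  have hB' : ∀ s, s = 0 ∨ s = 1 ∨ s = 2 ∨ s = 2 * m + 3 → W s = 0 :=
    fun s hs => hB s (mem_boundary_iff.mpr hs)
  have hW3 (hm : 1 ≤ m) : W 3 = 0 := by
    simpa [Fin.sum_univ_four, y_one, hB'] using hrow 1 le_rfl (by omega)
  have key : ∀ n, 1 ≤ n → n ≤ m → W (2 * n + 1) = 0 ∧ W (2 * n + 2) + W (2 * n + 3) = 0 := by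
    refine Nat.le_induction (fun hm => ⟨hW3 hm, ?_⟩) (fun n hn ih hnm => ?_)
    · simpa [Fin.sum_univ_four, y_two, hB'] using hrow 2 (by omega) (by omega)
    obtain ⟨-, hsum⟩ := ih (by omega)
    have hodd := hrow (2 * n + 1) (by omega) (by omega)
    rw [sum_y_two_mul_add_one W (by omega) (hB' 0 (by omega)) (hB' 2 (by omega))] at hodd
    have heven := hrow (2 * n + 2) (by omega) (by omega)
    rw [sum_y_two_mul_add_two W (by omega) (hB' 1 (by omega)) (hW3 (by omega))] at heven
    have hz : W (2 * n + 3) = 0 := by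
      have : 2 * W (2 * n + 3) = 0 := by linear_combination hsum + hodd - heven
      exact (mul_eq_zero.mp this).resolve_left h2
    refine ⟨hz, ?_⟩
    linear_combination heven - hsum + hz
  intro s hs
  by_cases hb : s = 0 ∨ s = 1 ∨ s = 2 ∨ s = 2 * m + 3
  · exact hB' s hb
  obtain ⟨n, rfl | rfl⟩ : ∃ n, s = 2 * n + 1 ∨ s = 2 * n + 2 := ⟨(s - 1) / 2, by omega⟩
  · exact (key n (by omega) (by omega)).1
  · have hnext : W (2 * n + 3) = 0 := by
      rcases (by omega : n = m ∨ n + 1 ≤ m) with rfl | hn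
      · exact hB' _ (by omega)
      · exact (key (n + 1) (by omega) hn).1
    linear_combination (key n (by omega) (by omega)).2 - hnext

lemma exists_fin_eq_add_one {k : ℕ} (hk : 1 ≤ k) (hkm : k ≤ 2 * m) :
    ∃ r : Fin (2 * m), k = (r : ℕ) + 1 :=
  ⟨⟨k - 1, by omega⟩, by simp only; omega⟩

theorem isUnit_incidence (h2 : (2 : K) ≠ 0) : IsUnit (incidence K m) := by
  refine Matrix.mulVec_injective_iff_isUnit.mp fun a b hab => ?_
  have hv : incidence K m *ᵥ (a - b) = 0 := by rw [Matrix.mulVec_sub, hab, sub_self]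
  have hW := eq_zero_of_sum_y_eq_zero h2 (fun s => extendByZero_of_mem_boundary (a - b))
    fun k hk hkm => by
      obtain ⟨r, rfl⟩ := exists_fin_eq_add_one hk hkm
      simp only [sum_y_eq_mulVec _ (fun s => extendByZero_of_mem_boundary (a - b)),
        extendByZero_add_three, hv, Pi.zero_apply]
  funext j
  simpa [extendByZero_add_three, sub_eq_zero] using hW (j + 3) (by omega)

theorem exists_sum_y_eq (h2 : (2 : K) ≠ 0) (g U : ℕ → K) :
    ∃ W : ℕ → K, (∀ s ∈ boundary m, W s = U s) ∧
      ∀ k, 1 ≤ k → k ≤ 2 * m → ∑ i, W (y k i) = g k := by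
  set U₀ := (boundary m).indicator U
  obtain ⟨v, hv⟩ := Matrix.mulVec_surjective_iff_isUnit.mpr (isUnit_incidence (m := m) h2)
    fun r => g (r + 1) - ∑ i, U₀ (y (r + 1) i)
  refine ⟨U₀ + extendByZero v, fun s hs => ?_, fun k hk hkm => ?_⟩
  · simp [U₀, hs, extendByZero_of_mem_boundary v hs]
  obtain ⟨r, rfl⟩ := exists_fin_eq_add_one hk hkm
  simp only [Pi.add_apply]
  rw [Finset.sum_add_distrib, sum_y_eq_mulVec _ (fun s => extendByZero_of_mem_boundary v)]
  simp only [extendByZero_add_three, hv]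
  ring

end IncidenceMatrix

lemma y_mem_proj_Sn_coord {N k : ℕ} (hk : 1 ≤ k) (hkN : k ≤ N) (i : Fin 4) :
    y k i ∈ proj (Sn N) (coord (y k i)) := by
  rw [coord_y hk]
  exact ⟨y k, ⟨k, ⟨hk, hkN⟩, rfl⟩, rfl⟩

lemma exists_y_eq_add_three {k : ℕ} (hk : k ≠ 0) (heven : k % 2 = 0) : ∃ i, y k i = k + 3 := by
  rcases (by omega : k = 2 ∨ (k ≠ 2 ∧ k % 4 = 2) ∨ k % 4 = 0) with rfl | ⟨hk2, h⟩ | h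
  · exact ⟨3, rfl⟩
  · exact ⟨3, by simp [y_of_mod_four_eq_two hk2 h]⟩
  · exact ⟨1, by simp [y_of_mod_four_eq_zero hk h]⟩

lemma mem_proj_coord_of_mem_boundary {m s : ℕ} (hm : 1 ≤ m) (hs : s ∈ boundary m) :
    s ∈ proj (Sn (2 * m)) (coord s) := by
  rcases mem_boundary_iff.mp hs with rfl | rfl | rfl | rfl
  · exact y_mem_proj_Sn_coord (k := 1) le_rfl (by omega) 0
  · exact y_mem_proj_Sn_coord (k := 1) le_rfl (by omega) 1
  · exact y_mem_proj_Sn_coord (k := 1) le_rfl (by omega) 2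
  · obtain ⟨i, hi⟩ := exists_y_eq_add_three (k := 2 * m) (by omega) (by omega)
    rw [← hi]
    exact y_mem_proj_Sn_coord (by omega) le_rfl i

theorem exists_solves_eq_on_boundary (m : ℕ) (f : (Fin 4 → ℕ) → ℂ) (U : ℕ → ℂ) :
    ∃ u, Solves (Sn (2 * m)) f u ∧ ∀ i, ∀ a ∈ boundary m, u i a = U a := by
  obtain ⟨W, hWB, hW⟩ := exists_sum_y_eq (m := m) two_ne_zero (fun k => f (y k)) U
  refine ⟨fun _ => W, ?_, fun _ => hWB⟩
  rintro _ ⟨k, ⟨hk, hkm⟩, rfl⟩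
  exact (hW k hk hkm).symm

theorem Solves.eq_on_proj_of_eq_on_boundary {m : ℕ} (hm : 1 ≤ m) {f : (Fin 4 → ℕ) → ℂ}
    {u v : Fin 4 → ℕ → ℂ} (hu : Solves (Sn (2 * m)) f u) (hv : Solves (Sn (2 * m)) f v)
    (huv : ∀ i, ∀ a ∈ boundary m ∩ proj (Sn (2 * m)) i, u i a = v i a) :
    ∀ i, ∀ a ∈ proj (Sn (2 * m)) i, u i a = v i a := by
  set W : ℕ → ℂ := fun s => u (coord s) s - v (coord s) s
  have hW := eq_zero_of_sum_y_eq_zero (m := m) two_ne_zero (W := W)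
    (fun s hs => sub_eq_zero.mpr (huv _ s ⟨hs, mem_proj_coord_of_mem_boundary hm hs⟩))
    fun k hk hkm => by
      have hmem : y k ∈ Sn (2 * m) := ⟨k, ⟨hk, hkm⟩, rfl⟩
      simp only [W, coord_y hk, Finset.sum_sub_distrib, ← hu _ hmem, ← hv _ hmem, sub_self]
  rintro i _ ⟨_, ⟨k, ⟨hk, hkm⟩, rfl⟩, rfl⟩
  have := hW (y k i) ((y_le hk i).trans (by omega))
  rwa [sub_eq_zero, coord_y hk] at this

/-- the 2m×2m matrix N_{2m}, obtained from the incidence matrix of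
S_{2m} by deleting the columns of x₁,x₂,x₃,α_{2m} (remaining columns: x₄ = 3 and
α₁,…,α_{2m−1}, i.e. symbol j+3 for column j), is invertible over ℚ;
consequently S_{2m} is good with boundary {x₁,x₂,x₃,α_{2m}}. -/
theorem stmt_5 (m : ℕ) (hm : 1 ≤ m) :
    IsUnit (Matrix.of fun i j : Fin (2 * m) =>
      if ∃ k, y ((i : ℕ) + 1) k = (j : ℕ) + 3 then (1 : ℚ) else 0) ∧
    IsGood (Sn (2 * m)) ∧
    IsBoundary (Sn (2 * m)) {0, 1, 2, α (2 * m)} := by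
  refine ⟨isUnit_incidence two_ne_zero, fun f => ?_,
    ⟨fun s hs => Set.mem_iUnion.mpr ⟨_, mem_proj_coord_of_mem_boundary hm hs⟩, fun f U => ⟨?_, ?_⟩⟩⟩
  · obtain ⟨u, hu, -⟩ := exists_solves_eq_on_boundary m f 0
    exact ⟨u, hu⟩
  · obtain ⟨u, hu, hU⟩ := exists_solves_eq_on_boundary m f U
    exact ⟨u, hu, fun i a ha => hU i a ha.1⟩
  · intro u v hu huU hv hvU
    exact hu.eq_on_proj_of_eq_on_boundary hm hv fun i a ha => (huU i a ha).trans (hvU i a ha).symm
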